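/- Let α, β be probability distributions on a finite set (points of the standard simplex P_n), and for t ∈ [0,1] let z(t) = t·α + (1-t)·β. Fix 0 ≤ a ≤ 1 and 0 ≤ c < b ≤ 1, and set u = z(a), v = z(b), w = z(c). If D(v‖u) = r·D(w‖u) with both relative entropies finite and positive, then 1/ρ(1-a,1-c,1-b) < r < ρ(a,b,c). -/

import Mathlib

noncomputable def zeta (t s : ℝ) : ℝ := s + (1 - t) * Real.log (1 - s)
noncomputable def xi (s t : ℝ) : ℝ := zeta t t - zeta t s
noncomputable def rho (a b c : ℝ) : ℝ := if a < 1 then xi a b / xi a c else (1 - b) / (1 - c)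

noncomputable def KL {n : ℕ} (p q : Fin n → ℝ) : ℝ :=
  ∑ i, p i * Real.log (p i / q i)

/-!
Write `z(t) = t α + (1 - t) β`. Since `∑ z_t = 1` for every `t`, `D(z(t)‖z(a))` is the sum over
the coordinates of `φ(t) = z_t log (z_t / z_a) - z_t + z_a`, and `ξ_a` is the same expression for
the pair `(α_i, β_i) = (0, 1)`. Both vanish to second order at `t = a`, and
`φ'' / ξ_a'' = (α_i - β_i)² (1 - t) / z_t` is strictly decreasing when `α_i > 0` and `α_i ≠ β_i`.
Two applications of the monotone l'Hôpital rule (Cauchy's mean value theorem) make `φ / ξ_a`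
strictly decreasing on each side of `a`, and across `a` the two sides are separated by
`φ''(a) / ξ_a''(a)`. So `φ(b) ξ_a(c) ≤ φ(c) ξ_a(b)` in every coordinate (with equality when
`α_i = 0` or `α_i = β_i`, where `φ` is a multiple of `ξ_a`), strictly in at least one, and summing
gives `r < ρ(a, b, c)`; for `a = 1` the same argument runs with `1 - t` in place of `ξ_a`. The
lower bound is the upper bound after exchanging `α` and `β` and reflecting `t ↦ 1 - t`, which
swaps `v` and `w`.
-/

open Real Set

section MonotoneLHopital

variable {f g f' g' : ℝ → ℝ} {a x : ℝ}

theorem exists_div_eq_deriv_div_right (hax : a < x) (hfc : ContinuousOn f (Icc a x))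
    (hgc : ContinuousOn g (Icc a x)) (hf : ∀ t ∈ Ioo a x, HasDerivAt f (f' t) t)
    (hg : ∀ t ∈ Ioo a x, HasDerivAt g (g' t) t) (hfa : f a = 0) (hga : g a = 0)
    (hgx : g x ≠ 0) (hg' : ∀ t ∈ Ioo a x, g' t ≠ 0) :
    ∃ s ∈ Ioo a x, f x / g x = f' s / g' s := by
  obtain ⟨s, hs, h⟩ := exists_ratio_hasDerivAt_eq_ratio_slope f f' hax hfc hf g g' hgc hg
  refine ⟨s, hs, (div_eq_div_iff hgx (hg' s hs)).2 ?_⟩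
  rw [hfa, hga] at h
  linear_combination -h

theorem exists_div_eq_deriv_div_left (hxa : x < a) (hfc : ContinuousOn f (Icc x a))
    (hgc : ContinuousOn g (Icc x a)) (hf : ∀ t ∈ Ioo x a, HasDerivAt f (f' t) t)
    (hg : ∀ t ∈ Ioo x a, HasDerivAt g (g' t) t) (hfa : f a = 0) (hga : g a = 0)
    (hgx : g x ≠ 0) (hg' : ∀ t ∈ Ioo x a, g' t ≠ 0) :
    ∃ s ∈ Ioo x a, f x / g x = f' s / g' s := by
  obtain ⟨s, hs, h⟩ := exists_ratio_hasDerivAt_eq_ratio_slope f f' hxa hfc hf g g' hgc hg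
  refine ⟨s, hs, (div_eq_div_iff hgx (hg' s hs)).2 ?_⟩
  rw [hfa, hga] at h
  linear_combination h

theorem strictAntiOn_div_of_deriv_div_right (hfc : ContinuousOn f (Icc a x))
    (hgc : ContinuousOn g (Icc a x)) (hf : ∀ t ∈ Ioo a x, HasDerivAt f (f' t) t)
    (hg : ∀ t ∈ Ioo a x, HasDerivAt g (g' t) t) (hfa : f a = 0) (hga : g a = 0)
    (hg0 : ∀ t ∈ Ioc a x, g t ≠ 0) (hgg' : ∀ t ∈ Ioo a x, 0 < g t * g' t)
    (hanti : StrictAntiOn (fun t => f' t / g' t) (Ioo a x)) :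
    StrictAntiOn (fun t => f t / g t) (Ioc a x) := by
  have hg'0 : ∀ t ∈ Ioo a x, g' t ≠ 0 := fun t ht h => by simpa [h] using hgg' t ht
  refine strictAntiOn_of_deriv_neg (convex_Ioc a x)
    ((hfc.mono Ioc_subset_Icc_self).div (hgc.mono Ioc_subset_Icc_self) hg0) ?_
  rw [interior_Ioc]
  intro t ht
  have hgt := hg0 t (Ioo_subset_Ioc_self ht)
  obtain ⟨s, hs, hst⟩ := exists_div_eq_deriv_div_right ht.1
    (hfc.mono (Icc_subset_Icc_right ht.2.le)) (hgc.mono (Icc_subset_Icc_right ht.2.le))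
    (fun u hu => hf u ⟨hu.1, hu.2.trans ht.2⟩) (fun u hu => hg u ⟨hu.1, hu.2.trans ht.2⟩)
    hfa hga hgt (fun u hu => hg'0 u ⟨hu.1, hu.2.trans ht.2⟩)
  have hlt : f' t / g' t < f t / g t := hst ▸ hanti ⟨hs.1, hs.2.trans ht.2⟩ ht hs.2
  have hderiv : HasDerivAt (fun t => f t / g t) ((f' t * g t - f t * g' t) / g t ^ 2) t :=
    (hf t ht).div (hg t ht) hgt
  have hnum : f' t * g t - f t * g' t = g t * g' t * (f' t / g' t - f t / g t) := by
    field_simp [hg'0 t ht]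
  rw [hderiv.deriv, hnum]
  exact div_neg_of_neg_of_pos (mul_neg_of_pos_of_neg (hgg' t ht) (sub_neg.2 hlt))
    (sq_pos_iff.2 hgt)

theorem strictAntiOn_div_of_deriv_div_left (hfc : ContinuousOn f (Icc x a))
    (hgc : ContinuousOn g (Icc x a)) (hf : ∀ t ∈ Ioo x a, HasDerivAt f (f' t) t)
    (hg : ∀ t ∈ Ioo x a, HasDerivAt g (g' t) t) (hfa : f a = 0) (hga : g a = 0)
    (hg0 : ∀ t ∈ Ico x a, g t ≠ 0) (hgg' : ∀ t ∈ Ioo x a, g t * g' t < 0)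
    (hanti : StrictAntiOn (fun t => f' t / g' t) (Ioo x a)) :
    StrictAntiOn (fun t => f t / g t) (Ico x a) := by
  have hg'0 : ∀ t ∈ Ioo x a, g' t ≠ 0 := fun t ht h => by simpa [h] using hgg' t ht
  refine strictAntiOn_of_deriv_neg (convex_Ico x a)
    ((hfc.mono Ico_subset_Icc_self).div (hgc.mono Ico_subset_Icc_self) hg0) ?_
  rw [interior_Ico]
  intro t ht
  have hgt := hg0 t (Ioo_subset_Ico_self ht)
  obtain ⟨s, hs, hst⟩ := exists_div_eq_deriv_div_left ht.2
    (hfc.mono (Icc_subset_Icc_left ht.1.le)) (hgc.mono (Icc_subset_Icc_left ht.1.le))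
    (fun u hu => hf u ⟨ht.1.trans hu.1, hu.2⟩) (fun u hu => hg u ⟨ht.1.trans hu.1, hu.2⟩)
    hfa hga hgt (fun u hu => hg'0 u ⟨ht.1.trans hu.1, hu.2⟩)
  have hlt : f t / g t < f' t / g' t := hst ▸ hanti ht ⟨ht.1.trans hs.1, hs.2⟩ hs.1
  have hderiv : HasDerivAt (fun t => f t / g t) ((f' t * g t - f t * g' t) / g t ^ 2) t :=
    (hf t ht).div (hg t ht) hgt
  have hnum : f' t * g t - f t * g' t = g t * g' t * (f' t / g' t - f t / g t) := by
    field_simp [hg'0 t ht]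
  rw [hderiv.deriv, hnum]
  exact div_neg_of_neg_of_pos (mul_neg_of_neg_of_pos (hgg' t ht) (sub_pos.2 hlt))
    (sq_pos_iff.2 hgt)

end MonotoneLHopital

def mixture (p q t : ℝ) : ℝ := t * p + (1 - t) * q

noncomputable def klTerm (p q a t : ℝ) : ℝ :=
  mixture p q t * log (mixture p q t) - mixture p q t * log (mixture p q a)
    - mixture p q t + mixture p q a

noncomputable def klTermDeriv (p q a t : ℝ) : ℝ :=
  (p - q) * (log (mixture p q t) - log (mixture p q a))

noncomputable def xiDeriv (a t : ℝ) : ℝ := log (1 - a) - log (1 - t)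

-- `klTerm'' / xi''`, by `hasDerivAt_klTermDeriv` and `hasDerivAt_xiDeriv`.
noncomputable def curvatureRatio (p q t : ℝ) : ℝ := (p - q) ^ 2 / mixture p q t / (1 - t)⁻¹

section

variable {p q a t : ℝ}

theorem mixture_sub_mixture (p q t s : ℝ) :
    mixture p q t - mixture p q s = (t - s) * (p - q) := by
  unfold mixture; ring

theorem mixture_symm (p q t : ℝ) : mixture q p (1 - t) = mixture p q t := by
  unfold mixture; ring

theorem mixture_same (p t : ℝ) : mixture p p t = p := by
  unfold mixture; ring

theorem mixture_nonneg (hp : 0 ≤ p) (hq : 0 ≤ q) (ht0 : 0 ≤ t) (ht1 : t ≤ 1) :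
    0 ≤ mixture p q t := by
  unfold mixture; nlinarith

theorem mixture_pos (hp : 0 < p) (hq : 0 ≤ q) (ht0 : 0 < t) (ht1 : t ≤ 1) :
    0 < mixture p q t := by
  unfold mixture; nlinarith

theorem mixture_pos_of_mem_Icc (hp : 0 < p) (hq : 0 ≤ q) (ha : 0 ≤ a)
    (hza : 0 < mixture p q a) (ht : t ∈ Icc a 1) : 0 < mixture p q t := by
  rcases ht.1.eq_or_lt with rfl | hat
  · exact hza
  · exact mixture_pos hp hq (ha.trans_lt hat) ht.2

theorem eq_of_mixture_eq_zero {b c : ℝ} (hbc : b ≠ c) (hb : mixture p q b = 0)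
    (hc : mixture p q c = 0) : p = q := by
  have h := mixture_sub_mixture p q b c
  rw [hb, hc, sub_self, zero_eq_mul] at h
  exact sub_eq_zero.1 (h.resolve_left (sub_ne_zero.2 hbc))

theorem hasDerivAt_mixture (p q t : ℝ) : HasDerivAt (mixture p q) (p - q) t := by
  have := ((hasDerivAt_id t).mul_const p).add
    (((hasDerivAt_const t (1 : ℝ)).sub (hasDerivAt_id t)).mul_const q)
  exact this.congr_deriv (by ring)

theorem continuous_klTerm (p q a : ℝ) : Continuous (klTerm p q a) := by
  have hz : Continuous (mixture p q) := by unfold mixture; fun_prop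
  have := continuous_mul_log.comp hz
  unfold klTerm
  fun_prop

theorem hasDerivAt_klTerm (hz : 0 < mixture p q t) :
    HasDerivAt (klTerm p q a) (klTermDeriv p q a t) t := by
  have hz' := hasDerivAt_mixture p q t
  have := (((hz'.mul (hz'.log hz.ne')).sub (hz'.mul_const (log (mixture p q a)))).sub hz').add_const
    (mixture p q a)
  refine this.congr_deriv ?_
  unfold klTermDeriv
  field_simp
  ring

theorem hasDerivAt_klTermDeriv (hz : 0 < mixture p q t) :
    HasDerivAt (klTermDeriv p q a) ((p - q) ^ 2 / mixture p q t) t := by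
  have := (((hasDerivAt_mixture p q t).log hz.ne').sub_const (log (mixture p q a))).const_mul
    (p - q)
  exact this.congr_deriv (by ring)

theorem continuous_xi (a : ℝ) : Continuous (xi a) := by
  have := continuous_mul_log.comp
    (continuous_const.sub continuous_id : Continuous fun t : ℝ => 1 - t)
  unfold xi zeta
  fun_prop

theorem hasDerivAt_xi (ht : t < 1) : HasDerivAt (xi a) (xiDeriv a t) t := by
  have h1 : HasDerivAt (fun t : ℝ => 1 - t) (-1) t := by
    simpa using (hasDerivAt_id t).const_sub 1
  have := ((hasDerivAt_id t).add (h1.mul (h1.log (by linarith)))).sub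
    ((hasDerivAt_const t a).add (h1.mul_const (log (1 - a))))
  refine this.congr_deriv ?_
  unfold xiDeriv
  field_simp [show (1 : ℝ) - t ≠ 0 by linarith]
  ring

theorem hasDerivAt_xiDeriv (ht : t < 1) : HasDerivAt (xiDeriv a) (1 - t)⁻¹ t := by
  have h1 : HasDerivAt (fun t : ℝ => 1 - t) (-1) t := by
    simpa using (hasDerivAt_id t).const_sub 1
  have := (h1.log (by linarith)).const_sub (log (1 - a))
  refine this.congr_deriv ?_
  field_simp

theorem klTerm_self (p q a : ℝ) : klTerm p q a a = 0 := by
  unfold klTerm; ring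

theorem klTermDeriv_self (p q a : ℝ) : klTermDeriv p q a a = 0 := by
  simp [klTermDeriv]

theorem xi_self (a : ℝ) : xi a a = 0 := sub_self _

theorem xiDeriv_self (a : ℝ) : xiDeriv a a = 0 := sub_self _

theorem klTerm_same (p a t : ℝ) : klTerm p p a t = 0 := by
  simp only [klTerm, mixture_same]; ring

theorem klTerm_zero_left (ha : a < 1) (ht : t ≤ 1) : klTerm 0 q a t = q * xi a t := by
  have hmix : ∀ s, mixture 0 q s = (1 - s) * q := fun s => by unfold mixture; ring
  simp only [klTerm, xi, zeta, hmix]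
  rcases eq_or_ne q 0 with rfl | hq
  · simp
  rcases ht.lt_or_eq with ht | rfl
  · rw [log_mul (by linarith) hq, log_mul (by linarith) hq]
    ring
  · simp [mul_comm]

theorem xiDeriv_pos (hat : a < t) (ht : t < 1) : 0 < xiDeriv a t :=
  sub_pos.2 (log_lt_log (by linarith) (by linarith))

theorem xiDeriv_neg (hta : t < a) (ha : a < 1) : xiDeriv a t < 0 :=
  sub_neg.2 (log_lt_log (by linarith) (by linarith))

theorem xi_pos (ha : a < 1) (ht : t ≤ 1) (hta : t ≠ a) : 0 < xi a t := by
  rcases hta.lt_or_gt with hta | hat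
  · have hanti : StrictAntiOn (xi a) (Icc t a) := by
      refine strictAntiOn_of_deriv_neg (convex_Icc t a) (continuous_xi a).continuousOn ?_
      rw [interior_Icc]
      intro s hs
      rw [(hasDerivAt_xi (hs.2.trans ha)).deriv]
      exact xiDeriv_neg hs.2 ha
    simpa [xi_self] using hanti (left_mem_Icc.2 hta.le) (right_mem_Icc.2 hta.le) hta
  · have hmono : StrictMonoOn (xi a) (Icc a t) := by
      refine strictMonoOn_of_deriv_pos (convex_Icc a t) (continuous_xi a).continuousOn ?_
      rw [interior_Icc]
      intro s hs
      rw [(hasDerivAt_xi (hs.2.trans_le ht)).deriv]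
      exact xiDeriv_pos hs.1 (hs.2.trans_le ht)
    simpa [xi_self] using hmono (left_mem_Icc.2 hat.le) (right_mem_Icc.2 hat.le) hat

theorem strictAntiOn_curvatureRatio (hp : 0 < p) (hq : 0 ≤ q) (hpq : p ≠ q) :
    StrictAntiOn (curvatureRatio p q) (Ioo 0 1) := by
  intro s hs t ht hst
  have hzs := mixture_pos hp hq hs.1 hs.2.le
  have hzt := mixture_pos hp hq ht.1 ht.2.le
  have hd : 0 < (p - q) ^ 2 := sq_pos_iff.2 (sub_ne_zero.2 hpq)
  have hcross : (1 - s) * mixture p q t - (1 - t) * mixture p q s = (t - s) * p := by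
    unfold mixture; ring
  simp only [curvatureRatio, div_inv_eq_mul, div_mul_eq_mul_div]
  rw [div_lt_div_iff₀ hzt hzs]
  nlinarith [mul_pos hd (mul_pos (sub_pos.2 hst) hp)]

theorem strictAntiOn_klTermDeriv_div_xiDeriv_right (hp : 0 < p) (hq : 0 ≤ q) (hpq : p ≠ q)
    (ha : 0 ≤ a) (hza : 0 < mixture p q a) :
    StrictAntiOn (fun t => klTermDeriv p q a t / xiDeriv a t) (Ioo a 1) := by
  intro s hs t ht hst
  have hz : ∀ u ∈ Icc a t, 0 < mixture p q u := fun u hu =>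
    mixture_pos_of_mem_Icc hp hq ha hza ⟨hu.1, hu.2.trans ht.2.le⟩
  have hxi : ∀ u ∈ Ioc a t, 0 < xiDeriv a u := fun u hu => xiDeriv_pos hu.1 (hu.2.trans_lt ht.2)
  refine strictAntiOn_div_of_deriv_div_right (f' := fun u => (p - q) ^ 2 / mixture p q u)
    (g' := fun u => (1 - u)⁻¹)
    (fun u hu => (hasDerivAt_klTermDeriv (hz u hu)).continuousAt.continuousWithinAt)
    (fun u hu => (hasDerivAt_xiDeriv (hu.2.trans_lt ht.2)).continuousAt.continuousWithinAt)
    (fun u hu => hasDerivAt_klTermDeriv (hz u (Ioo_subset_Icc_self hu)))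
    (fun u hu => hasDerivAt_xiDeriv (hu.2.trans ht.2)) (klTermDeriv_self p q a) (xiDeriv_self a)
    (fun u hu => (hxi u hu).ne')
    (fun u hu => mul_pos (hxi u (Ioo_subset_Ioc_self hu)) (inv_pos.2 (by linarith [hu.2, ht.2])))
    ((strictAntiOn_curvatureRatio hp hq hpq).mono (Ioo_subset_Ioo ha ht.2.le))
    ⟨hs.1, hst.le⟩ ⟨ht.1, le_rfl⟩ hst

theorem strictAntiOn_klTerm_div_xi_right (hp : 0 < p) (hq : 0 ≤ q) (hpq : p ≠ q) (ha : 0 ≤ a)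
    (ha1 : a < 1) (hza : 0 < mixture p q a) :
    StrictAntiOn (fun t => klTerm p q a t / xi a t) (Ioc a 1) :=
  strictAntiOn_div_of_deriv_div_right (continuous_klTerm p q a).continuousOn
    (continuous_xi a).continuousOn
    (fun _ ht => hasDerivAt_klTerm (mixture_pos_of_mem_Icc hp hq ha hza (Ioo_subset_Icc_self ht)))
    (fun _ ht => hasDerivAt_xi ht.2) (klTerm_self p q a) (xi_self a)
    (fun _ ht => (xi_pos ha1 ht.2 ht.1.ne').ne')
    (fun _ ht => mul_pos (xi_pos ha1 ht.2.le ht.1.ne') (xiDeriv_pos ht.1 ht.2))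
    (strictAntiOn_klTermDeriv_div_xiDeriv_right hp hq hpq ha hza)

theorem strictAntiOn_klTermDeriv_div_xiDeriv_left (hp : 0 < p) (hq : 0 ≤ q) (hpq : p ≠ q)
    (ha1 : a < 1) : StrictAntiOn (fun t => klTermDeriv p q a t / xiDeriv a t) (Ioo 0 a) := by
  intro s hs t ht hst
  have hz : ∀ u ∈ Icc s a, 0 < mixture p q u := fun u hu =>
    mixture_pos hp hq (hs.1.trans_le hu.1) (hu.2.trans ha1.le)
  have hxi : ∀ u ∈ Ico s a, xiDeriv a u < 0 := fun u hu => xiDeriv_neg hu.2 ha1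
  refine strictAntiOn_div_of_deriv_div_left (f' := fun u => (p - q) ^ 2 / mixture p q u)
    (g' := fun u => (1 - u)⁻¹)
    (fun u hu => (hasDerivAt_klTermDeriv (hz u hu)).continuousAt.continuousWithinAt)
    (fun u hu => (hasDerivAt_xiDeriv (hu.2.trans_lt ha1)).continuousAt.continuousWithinAt)
    (fun u hu => hasDerivAt_klTermDeriv (hz u (Ioo_subset_Icc_self hu)))
    (fun u hu => hasDerivAt_xiDeriv (hu.2.trans ha1)) (klTermDeriv_self p q a) (xiDeriv_self a)
    (fun u hu => (hxi u hu).ne)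
    (fun u hu => mul_neg_of_neg_of_pos (hxi u (Ioo_subset_Ico_self hu))
      (inv_pos.2 (by linarith [hu.2])))
    ((strictAntiOn_curvatureRatio hp hq hpq).mono (Ioo_subset_Ioo hs.1.le ha1.le))
    ⟨le_rfl, hs.2⟩ ⟨hst.le, ht.2⟩ hst

theorem strictAntiOn_klTerm_div_xi_left (hp : 0 < p) (hq : 0 ≤ q) (hpq : p ≠ q) (ha1 : a < 1) :
    StrictAntiOn (fun t => klTerm p q a t / xi a t) (Ico 0 a) :=
  strictAntiOn_div_of_deriv_div_left (continuous_klTerm p q a).continuousOn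
    (continuous_xi a).continuousOn
    (fun _ ht => hasDerivAt_klTerm (mixture_pos hp hq ht.1 (ht.2.trans ha1).le))
    (fun _ ht => hasDerivAt_xi (ht.2.trans ha1)) (klTerm_self p q a) (xi_self a)
    (fun _ ht => (xi_pos ha1 (ht.2.trans ha1).le ht.2.ne).ne')
    (fun _ ht => mul_neg_of_pos_of_neg (xi_pos ha1 (ht.2.trans ha1).le ht.2.ne)
      (xiDeriv_neg ht.2 ha1))
    (strictAntiOn_klTermDeriv_div_xiDeriv_left hp hq hpq ha1)

theorem exists_klTerm_div_xi_eq_curvatureRatio_right (hp : 0 < p) (hq : 0 ≤ q) (ha : 0 ≤ a)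
    (hza : 0 < mixture p q a) {b : ℝ} (hab : a < b) (hb : b ≤ 1) :
    ∃ s ∈ Ioo a b, klTerm p q a b / xi a b = curvatureRatio p q s := by
  have hz : ∀ t ∈ Icc a 1, 0 < mixture p q t := fun _ ht => mixture_pos_of_mem_Icc hp hq ha hza ht
  obtain ⟨s, hs, hbs⟩ := exists_div_eq_deriv_div_right hab (continuous_klTerm p q a).continuousOn
    (continuous_xi a).continuousOn
    (fun t ht => hasDerivAt_klTerm (hz t ⟨ht.1.le, ht.2.le.trans hb⟩))
    (fun t ht => hasDerivAt_xi (ht.2.trans_le hb)) (klTerm_self p q a) (xi_self a)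
    (xi_pos (hab.trans_le hb) hb hab.ne').ne'
    (fun t ht => (xiDeriv_pos ht.1 (ht.2.trans_le hb)).ne')
  have hs1 : s < 1 := hs.2.trans_le hb
  obtain ⟨s', hs', hss'⟩ := exists_div_eq_deriv_div_right hs.1
    (f' := fun u => (p - q) ^ 2 / mixture p q u) (g' := fun u => (1 - u)⁻¹)
    (fun u hu =>
      (hasDerivAt_klTermDeriv (hz u ⟨hu.1, hu.2.trans hs1.le⟩)).continuousAt.continuousWithinAt)
    (fun u hu => (hasDerivAt_xiDeriv (hu.2.trans_lt hs1)).continuousAt.continuousWithinAt)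
    (fun u hu => hasDerivAt_klTermDeriv (hz u ⟨hu.1.le, hu.2.le.trans hs1.le⟩))
    (fun u hu => hasDerivAt_xiDeriv (hu.2.trans hs1)) (klTermDeriv_self p q a) (xiDeriv_self a)
    (xiDeriv_pos hs.1 hs1).ne' (fun u hu => (inv_pos.2 (sub_pos.2 (hu.2.trans hs1))).ne')
  exact ⟨s', ⟨hs'.1, hs'.2.trans hs.2⟩, hbs.trans hss'⟩

theorem exists_klTerm_div_xi_eq_curvatureRatio_left (hp : 0 < p) (hq : 0 ≤ q) (ha1 : a < 1)
    {c : ℝ} (hc : 0 ≤ c) (hca : c < a) :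
    ∃ s ∈ Ioo c a, klTerm p q a c / xi a c = curvatureRatio p q s := by
  obtain ⟨s, hs, hcs⟩ := exists_div_eq_deriv_div_left hca (continuous_klTerm p q a).continuousOn
    (continuous_xi a).continuousOn
    (fun t ht => hasDerivAt_klTerm (mixture_pos hp hq (hc.trans_lt ht.1) (ht.2.trans ha1).le))
    (fun t ht => hasDerivAt_xi (ht.2.trans ha1)) (klTerm_self p q a) (xi_self a)
    (xi_pos ha1 (hca.trans ha1).le hca.ne).ne'
    (fun t ht => (xiDeriv_neg ht.2 ha1).ne)
  have hs0 : 0 < s := hc.trans_lt hs.1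
  have hz : ∀ u ∈ Icc s a, 0 < mixture p q u := fun u hu =>
    mixture_pos hp hq (hs0.trans_le hu.1) (hu.2.trans ha1.le)
  obtain ⟨s', hs', hss'⟩ := exists_div_eq_deriv_div_left hs.2
    (f' := fun u => (p - q) ^ 2 / mixture p q u) (g' := fun u => (1 - u)⁻¹)
    (fun u hu => (hasDerivAt_klTermDeriv (hz u hu)).continuousAt.continuousWithinAt)
    (fun u hu => (hasDerivAt_xiDeriv (hu.2.trans_lt ha1)).continuousAt.continuousWithinAt)
    (fun u hu => hasDerivAt_klTermDeriv (hz u (Ioo_subset_Icc_self hu)))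
    (fun u hu => hasDerivAt_xiDeriv (hu.2.trans ha1)) (klTermDeriv_self p q a) (xiDeriv_self a)
    (xiDeriv_neg hs.2 ha1).ne (fun u hu => (inv_pos.2 (sub_pos.2 (hu.2.trans ha1))).ne')
  exact ⟨s', ⟨hs.1.trans hs'.1, hs'.2⟩, hcs.trans hss'⟩

theorem klTerm_mul_xi_lt (hp : 0 < p) (hq : 0 ≤ q) (hpq : p ≠ q) (ha : 0 ≤ a) (ha1 : a < 1)
    (hza : 0 < mixture p q a) {b c : ℝ} (hc : 0 ≤ c) (hcb : c < b) (hb : b ≤ 1) (hab : a ≠ b)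
    (hac : a ≠ c) : klTerm p q a b * xi a c < klTerm p q a c * xi a b := by
  rw [← div_lt_div_iff₀ (xi_pos ha1 hb hab.symm) (xi_pos ha1 (hcb.le.trans hb) hac.symm)]
  rcases hab.lt_or_gt with hab | hba
  · rcases hac.lt_or_gt with hac | hca
    · exact strictAntiOn_klTerm_div_xi_right hp hq hpq ha ha1 hza ⟨hac, hcb.le.trans hb⟩
        ⟨hab, hb⟩ hcb
    · obtain ⟨s, hs, hbs⟩ := exists_klTerm_div_xi_eq_curvatureRatio_right hp hq ha hza hab hb
      obtain ⟨s', hs', hcs'⟩ := exists_klTerm_div_xi_eq_curvatureRatio_left hp hq ha1 hc hca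
      have hanti := strictAntiOn_curvatureRatio hp hq hpq
      have ha0 : 0 < a := hc.trans_lt hca
      calc klTerm p q a b / xi a b = curvatureRatio p q s := hbs
        _ < curvatureRatio p q a := hanti ⟨ha0, ha1⟩ ⟨ha0.trans hs.1, hs.2.trans_le hb⟩ hs.1
        _ < curvatureRatio p q s' := hanti ⟨hc.trans_lt hs'.1, hs'.2.trans ha1⟩ ⟨ha0, ha1⟩ hs'.2
        _ = klTerm p q a c / xi a c := hcs'.symm
  · exact strictAntiOn_klTerm_div_xi_left hp hq hpq ha1 ⟨hc, hcb.trans hba⟩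
      ⟨hc.trans hcb.le, hba⟩ hcb

theorem klTerm_one_mul_lt (hp : 0 < p) (hq : 0 ≤ q) (hpq : p ≠ q) {b c : ℝ} (hc : 0 ≤ c)
    (hcb : c < b) (hb : b < 1) : klTerm p q 1 b * (1 - c) < klTerm p q 1 c * (1 - b) := by
  rw [← div_lt_div_iff₀ (sub_pos.2 hb) (by linarith)]
  have hz : ∀ t ∈ Ioo (0 : ℝ) 1, 0 < mixture p q t := fun _ ht => mixture_pos hp hq ht.1 ht.2.le
  have hd : 0 < (p - q) ^ 2 := sq_pos_iff.2 (sub_ne_zero.2 hpq)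
  have hanti : StrictAntiOn (fun t => klTermDeriv p q 1 t / -1) (Ioo 0 1) := by
    refine strictAntiOn_of_deriv_neg (convex_Ioo 0 1) (fun t ht =>
      ((hasDerivAt_klTermDeriv (hz t ht)).div_const (-1)).continuousAt.continuousWithinAt) ?_
    rw [interior_Ioo]
    intro t ht
    rw [((hasDerivAt_klTermDeriv (hz t ht)).div_const (-1)).deriv, div_neg, div_one, neg_lt_zero]
    exact div_pos hd (hz t ht)
  refine strictAntiOn_div_of_deriv_div_left (g := fun t => 1 - t) (f' := klTermDeriv p q 1)
    (g' := fun _ => -1)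
    (continuous_klTerm p q 1).continuousOn (continuous_const.sub continuous_id).continuousOn
    (fun t ht => hasDerivAt_klTerm (hz t ht))
    (fun t _ => by simpa using (hasDerivAt_id t).const_sub 1) (klTerm_self p q 1) (sub_self 1)
    (fun t ht => (sub_pos.2 ht.2).ne') (fun t ht => by simp; linarith [ht.2]) hanti
    ⟨hc, hcb.trans hb⟩ ⟨hc.trans hcb.le, hb⟩ hcb

theorem klTerm_mul_xi_le (hp : 0 ≤ p) (hq : 0 ≤ q) (hsupp : mixture p q a = 0 → p = q)
    (ha : 0 ≤ a) (ha1 : a < 1) {b c : ℝ} (hc : 0 ≤ c) (hcb : c < b) (hb : b ≤ 1) (hab : a ≠ b)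
    (hac : a ≠ c) : klTerm p q a b * xi a c ≤ klTerm p q a c * xi a b := by
  rcases eq_or_ne p q with rfl | hpq
  · simp [klTerm_same]
  rcases hp.eq_or_lt with rfl | hp
  · rw [klTerm_zero_left ha1 hb, klTerm_zero_left ha1 (hcb.le.trans hb)]
    exact (mul_right_comm _ _ _).le
  have hza : 0 < mixture p q a :=
    (mixture_nonneg hp.le hq ha ha1.le).lt_of_ne' (fun h => hpq (hsupp h))
  exact (klTerm_mul_xi_lt hp hq hpq ha ha1 hza hc hcb hb hab hac).le

theorem klTerm_one_mul_le (hp : 0 ≤ p) (hq : 0 ≤ q) (hsupp : mixture p q 1 = 0 → p = q)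
    {b c : ℝ} (hc : 0 ≤ c) (hcb : c < b) (hb : b < 1) :
    klTerm p q 1 b * (1 - c) ≤ klTerm p q 1 c * (1 - b) := by
  rcases eq_or_ne p q with rfl | hpq
  · simp [klTerm_same]
  have hp : 0 < p := hp.lt_of_ne' fun h => hpq (hsupp (by simp [mixture, h]))
  exact (klTerm_one_mul_lt hp hq hpq hc hcb hb).le

end

theorem sum_div_sum_lt_div {ι : Type*} [Fintype ι] {F G : ι → ℝ} {x y : ℝ} (hy : 0 < y)
    (hG : 0 < ∑ i, G i) (hle : ∀ i, F i * y ≤ G i * x) (hlt : ∃ i, F i * y < G i * x) :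
    (∑ i, F i) / ∑ i, G i < x / y := by
  rw [div_lt_div_iff₀ hG hy, Finset.sum_mul, mul_comm x, Finset.sum_mul]
  obtain ⟨i, hi⟩ := hlt
  exact Finset.sum_lt_sum (fun j _ => hle j) ⟨i, Finset.mem_univ i, hi⟩

theorem exists_pos_ne_of_sum_eq {ι : Type*} [Fintype ι] {α β : ι → ℝ} (hα0 : ∀ i, 0 ≤ α i)
    (hβ0 : ∀ i, 0 ≤ β i) (hsum : ∑ i, α i = ∑ i, β i) (hne : α ≠ β) :
    ∃ i, 0 < α i ∧ α i ≠ β i := by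
  by_contra! h
  have hle : ∀ i ∈ Finset.univ, α i ≤ β i := fun i _ => by
    rcases (hα0 i).eq_or_lt with h0 | h0
    · exact h0 ▸ hβ0 i
    · exact (h i h0).le
  exact hne (funext fun i => (Finset.sum_eq_sum_iff_of_le hle).1 hsum i (Finset.mem_univ i))

theorem KL_self {n : ℕ} (p : Fin n → ℝ) : KL p p = 0 :=
  Finset.sum_eq_zero fun i _ => by rcases eq_or_ne (p i) 0 with h | h <;> simp [h]

theorem KL_mixture_eq_sum_klTerm {n : ℕ} {α β : Fin n → ℝ} (hα1 : ∑ i, α i = 1)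
    (hβ1 : ∑ i, β i = 1) {a t : ℝ}
    (h : ∀ i, mixture (α i) (β i) a = 0 → mixture (α i) (β i) t = 0) :
    KL (fun i => mixture (α i) (β i) t) (fun i => mixture (α i) (β i) a)
      = ∑ i, klTerm (α i) (β i) a t := by
  have hsum : ∀ s, ∑ i, mixture (α i) (β i) s = 1 := fun s => by
    simp only [mixture, Finset.sum_add_distrib, ← Finset.mul_sum, hα1, hβ1]
    ring
  have hterm : ∀ i, mixture (α i) (β i) t * log (mixture (α i) (β i) t / mixture (α i) (β i) a)
      = klTerm (α i) (β i) a t + mixture (α i) (β i) t - mixture (α i) (β i) a := by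
    intro i
    rcases eq_or_ne (mixture (α i) (β i) t) 0 with ht | ht
    · simp [klTerm, ht]
    · rw [log_div ht fun ha => ht (h i ha)]
      unfold klTerm
      ring
  simp only [KL, hterm, Finset.sum_sub_distrib, Finset.sum_add_distrib, hsum]
  ring

theorem KL_div_KL_lt_rho {n : ℕ} {α β : Fin n → ℝ} (hα0 : ∀ i, 0 ≤ α i) (hα1 : ∑ i, α i = 1)
    (hβ0 : ∀ i, 0 ≤ β i) (hβ1 : ∑ i, β i = 1) {a b c : ℝ} (ha : 0 ≤ a) (ha1 : a ≤ 1)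
    (hc : 0 ≤ c) (hcb : c < b) (hb : b ≤ 1) {u v w : Fin n → ℝ}
    (hu : u = fun i => mixture (α i) (β i) a) (hv : v = fun i => mixture (α i) (β i) b)
    (hw : w = fun i => mixture (α i) (β i) c) (hvu : ∀ i, u i = 0 → v i = 0)
    (hwu : ∀ i, u i = 0 → w i = 0) (hvpos : 0 < KL v u) (hwpos : 0 < KL w u) :
    KL v u / KL w u < rho a b c := by
  subst hu hv hw
  have hab : a ≠ b := by rintro rfl; simp [KL_self] at hvpos
  have hac : a ≠ c := by rintro rfl; simp [KL_self] at hwpos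
  have hαβ : α ≠ β := by rintro rfl; simp [mixture_same, KL_self] at hvpos
  have hsupp : ∀ i, mixture (α i) (β i) a = 0 → α i = β i := fun i hi =>
    eq_of_mixture_eq_zero hcb.ne' (hvu i hi) (hwu i hi)
  obtain ⟨i, hi0, hine⟩ := exists_pos_ne_of_sum_eq hα0 hβ0 (hα1.trans hβ1.symm) hαβ
  rw [KL_mixture_eq_sum_klTerm hα1 hβ1 hwu] at hwpos
  rw [KL_mixture_eq_sum_klTerm hα1 hβ1 hvu, KL_mixture_eq_sum_klTerm hα1 hβ1 hwu, rho]
  rcases ha1.lt_or_eq with ha1 | rfl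
  · have hzi : 0 < mixture (α i) (β i) a :=
      (mixture_nonneg (hα0 i) (hβ0 i) ha ha1.le).lt_of_ne' fun h => hine (hsupp i h)
    rw [if_pos ha1]
    exact sum_div_sum_lt_div (xi_pos ha1 (hcb.le.trans hb) hac.symm) hwpos
      (fun j => klTerm_mul_xi_le (hα0 j) (hβ0 j) (hsupp j) ha ha1 hc hcb hb hab hac)
      ⟨i, klTerm_mul_xi_lt hi0 (hβ0 i) hine ha ha1 hzi hc hcb hb hab hac⟩
  · have hb1 : b < 1 := hb.lt_of_ne hab.symm
    rw [if_neg (lt_irrefl 1)]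
    exact sum_div_sum_lt_div (by linarith) hwpos
      (fun j => klTerm_one_mul_le (hα0 j) (hβ0 j) (hsupp j) hc hcb hb1)
      ⟨i, klTerm_one_mul_lt hi0 (hβ0 i) hine hc hcb hb1⟩

theorem stmt13 (n : ℕ) (α β : Fin n → ℝ)
    (hα : (∀ i, 0 ≤ α i) ∧ ∑ i, α i = 1)
    (hβ : (∀ i, 0 ≤ β i) ∧ ∑ i, β i = 1)
    (a b c r : ℝ) (ha : 0 ≤ a) (ha1 : a ≤ 1) (hc : 0 ≤ c) (hcb : c < b) (hb : b ≤ 1)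
    (u v w : Fin n → ℝ)
    (hu : u = fun i => a * α i + (1 - a) * β i)
    (hv : v = fun i => b * α i + (1 - b) * β i)
    (hw : w = fun i => c * α i + (1 - c) * β i)
    (hvu : ∀ i, u i = 0 → v i = 0)
    (hwu : ∀ i, u i = 0 → w i = 0)
    (hvpos : 0 < KL v u) (hwpos : 0 < KL w u)
    (hr : KL v u = r * KL w u) :
    1 / rho (1 - a) (1 - c) (1 - b) < r ∧ r < rho a b c := by
  obtain ⟨hα0, hα1⟩ := hα
  obtain ⟨hβ0, hβ1⟩ := hβ
  have hflip : ∀ t, (fun i => t * α i + (1 - t) * β i) = fun i => mixture (β i) (α i) (1 - t) :=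
    fun t => funext fun i => (mixture_symm (α i) (β i) t).symm
  have hupper := KL_div_KL_lt_rho hα0 hα1 hβ0 hβ1 ha ha1 hc hcb hb hu hv hw hvu hwu hvpos hwpos
  have hlower : KL w u / KL v u < rho (1 - a) (1 - c) (1 - b) :=
    KL_div_KL_lt_rho hβ0 hβ1 hα0 hα1 (sub_nonneg.2 ha1) (by linarith) (sub_nonneg.2 hb)
      (by linarith) (by linarith) (hu.trans (hflip a)) (hw.trans (hflip c)) (hv.trans (hflip b))
      hwu hvu hwpos hvpos
  rw [(eq_div_iff hwpos.ne').2 hr.symm]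
  refine ⟨?_, hupper⟩
  rw [one_div_lt ((div_pos hwpos hvpos).trans hlower) (div_pos hvpos hwpos), one_div_div]
  exact hlower
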